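/- arXiv:2201.11360 — 3 statements merged into one kernel-verified Lean document; each statement's English description precedes it below -/
import Mathlib

section
/- Let S₁ := (1/2)(|01⟩⟨01| + |10⟩⟨10| + |11⟩⟨11| − |00⟩⟨00|) acting on ℂ² ⊗ ℂ², and let X₁ := (2/9)|φ₂⁺⟩⟨φ₂⁺| + (1/9)|01⟩⟨01| + (1/9)|10⟩⟨10| + (5/9)|00⟩⟨00|. Then Tr(S₁σ) ≥ 0 for every σ ∈ 𝔄𝔉₂, while Tr(S₁X₁) = −1/6 < 0; consequently X₁ ∉ 𝔄𝔉₂. -/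
open Matrix Kronecker Complex
open scoped ComplexOrder

/-- The canonical maximally entangled vector `|ψ⁺⟩ = (1/√d) ∑ᵢ |ii⟩` on `ℂ^d ⊗ ℂ^d`. -/
noncomputable def psiPlus (d : ℕ) : (Fin d × Fin d) → ℂ :=
  fun p => if p.1 = p.2 then ((Real.sqrt d)⁻¹ : ℝ) else 0

/-- The fully entangled fraction: the supremum over `d × d` unitaries `V` of
`⟨ψ⁺| (I ⊗ V)† ρ (I ⊗ V) |ψ⁺⟩`. -/
noncomputable def fef (d : ℕ) (ρ : Matrix (Fin d × Fin d) (Fin d × Fin d) ℂ) : ℝ :=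
  ⨆ V : Matrix.unitaryGroup (Fin d) ℂ,
    (star (psiPlus d) ⬝ᵥ
      ((((1 : Matrix (Fin d) (Fin d) ℂ) ⊗ₖ (V : Matrix (Fin d) (Fin d) ℂ))ᴴ * ρ *
        ((1 : Matrix (Fin d) (Fin d) ℂ) ⊗ₖ (V : Matrix (Fin d) (Fin d) ℂ))) *ᵥ psiPlus d)).re

/-- A density matrix: positive semidefinite with unit trace. -/
def IsDensityMatrix {n : Type*} [Fintype n] (ρ : Matrix n n ℂ) : Prop :=
  ρ.PosSemidef ∧ ρ.trace = 1

/-- `ρ` has absolute fully entangled fraction: `F(UρU†) ≤ 1/d` for every unitary `U`. -/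
def AbsFEF (d : ℕ) (ρ : Matrix (Fin d × Fin d) (Fin d × Fin d) ℂ) : Prop :=
  ∀ U ∈ Matrix.unitaryGroup (Fin d × Fin d) ℂ, fef d (U * ρ * Uᴴ) ≤ 1 / d

/-- Basis vector `|ij⟩` of `ℂ^d ⊗ ℂ^d`. -/
def ket (d : ℕ) (i j : Fin d) : (Fin d × Fin d) → ℂ :=
  fun p => if p = (i, j) then 1 else 0

/-- Rank-one projector `|v⟩⟨v|`. -/
def proj {n : Type*} (v : n → ℂ) : Matrix n n ℂ :=
  Matrix.vecMulVec v (star v)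

/-- The state `X₁ = (2/9)|φ₂⁺⟩⟨φ₂⁺| + (1/9)|01⟩⟨01| + (1/9)|10⟩⟨10| + (5/9)|00⟩⟨00|`. -/
noncomputable def X₁ : Matrix (Fin 2 × Fin 2) (Fin 2 × Fin 2) ℂ :=
  (2/9 : ℂ) • proj (psiPlus 2) + (1/9 : ℂ) • proj (ket 2 0 1) +
    (1/9 : ℂ) • proj (ket 2 1 0) + (5/9 : ℂ) • proj (ket 2 0 0)

/-- The witness `S₁ = (1/2)(|01⟩⟨01| + |10⟩⟨10| + |11⟩⟨11| − |00⟩⟨00|)`. -/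
noncomputable def S₁ : Matrix (Fin 2 × Fin 2) (Fin 2 × Fin 2) ℂ :=
  (1/2 : ℂ) • (proj (ket 2 0 1) + proj (ket 2 1 0) + proj (ket 2 1 1) - proj (ket 2 0 0))

/-!
Take a unitary `U` on `ℂ² ⊗ ℂ²` sending `|00⟩` to `|φ₂⁺⟩`. Choosing `V = I` in the supremum
defining `F` (a finite supremum, the unitary group being compact), every `σ ∈ 𝔄𝔉₂` satisfies
`σ₀₀,₀₀ = ⟨φ₂⁺|UσU†|φ₂⁺⟩ ≤ F(UσU†) ≤ 1/2`. Since `S₁ = I/2 − |00⟩⟨00|`, this gives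
`Tr(S₁σ) = 1/2 − σ₀₀,₀₀ ≥ 0` for trace-one `σ`, whereas `X₁` has trace one and `(X₁)₀₀,₀₀ = 2/3`.
-/

@[fun_prop]
theorem Continuous.matrix_kronecker {X R m n p q : Type*} [TopologicalSpace X] [TopologicalSpace R]
    [Mul R] [ContinuousMul R] {A : X → Matrix m n R} {B : X → Matrix p q R}
    (hA : Continuous A) (hB : Continuous B) : Continuous fun x => A x ⊗ₖ B x :=
  continuous_pi fun _ => continuous_pi fun _ => (hA.matrix_elem _ _).mul (hB.matrix_elem _ _)

theorem Matrix.isCompact_unitaryGroup (n 𝕜 : Type*) [Fintype n] [DecidableEq n] [RCLike 𝕜] :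
    IsCompact (unitaryGroup n 𝕜 : Set (Matrix n n 𝕜)) := by
  refine IsCompact.of_isClosed_subset (s := Set.univ.pi fun _ => Set.univ.pi fun _ =>
    Metric.closedBall (0 : 𝕜) 1) (isCompact_univ_pi fun _ => isCompact_univ_pi fun _ =>
    isCompact_closedBall _ _) (isClosed_unitary (R := Matrix n n 𝕜)) fun U hU => ?_
  simpa [Set.mem_pi] using entry_norm_bound_of_unitary hU

theorem Matrix.bddAbove_range_unitaryGroup {n 𝕜 : Type*} [Fintype n] [DecidableEq n] [RCLike 𝕜]
    {f : Matrix n n 𝕜 → ℝ} (hf : Continuous f) :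
    BddAbove (Set.range fun U : unitaryGroup n 𝕜 => f U) := by
  refine ((isCompact_unitaryGroup n 𝕜).bddAbove_image hf.continuousOn).mono ?_
  rintro _ ⟨U, rfl⟩
  exact Set.mem_image_of_mem f U.2

lemma re_expectation_psiPlus_le_fef (d : ℕ) (ρ : Matrix (Fin d × Fin d) (Fin d × Fin d) ℂ) :
    (star (psiPlus d) ⬝ᵥ ρ *ᵥ psiPlus d).re ≤ fef d ρ := by
  have hbdd := Matrix.bddAbove_range_unitaryGroup (n := Fin d)
    (f := fun V => (star (psiPlus d) ⬝ᵥ ((1 ⊗ₖ V)ᴴ * ρ * (1 ⊗ₖ V)) *ᵥ psiPlus d).re) (by fun_prop)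
  simpa [fef] using le_ciSup hbdd 1

lemma AbsFEF.re_expectation_le {d : ℕ} {σ : Matrix (Fin d × Fin d) (Fin d × Fin d) ℂ}
    (hσ : AbsFEF d σ) {U : Matrix (Fin d × Fin d) (Fin d × Fin d) ℂ}
    (hU : U ∈ unitaryGroup (Fin d × Fin d) ℂ) :
    (star (Uᴴ *ᵥ psiPlus d) ⬝ᵥ σ *ᵥ (Uᴴ *ᵥ psiPlus d)).re ≤ 1 / d := by
  have hconj : star (Uᴴ *ᵥ psiPlus d) ⬝ᵥ σ *ᵥ (Uᴴ *ᵥ psiPlus d)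
      = star (psiPlus d) ⬝ᵥ (U * σ * Uᴴ) *ᵥ psiPlus d := by
    rw [star_mulVec, conjTranspose_conjTranspose, ← dotProduct_mulVec, mulVec_mulVec,
      mulVec_mulVec, mul_assoc]
  rw [hconj]
  exact (re_expectation_psiPlus_le_fef d _).trans (hσ U hU)

lemma star_ket_dotProduct_mulVec_ket (d : ℕ) (ρ : Matrix (Fin d × Fin d) (Fin d × Fin d) ℂ)
    (i j : Fin d) : star (ket d i j) ⬝ᵥ ρ *ᵥ ket d i j = ρ (i, j) (i, j) := by
  simp [ket, dotProduct, mulVec]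

noncomputable def invSqrtTwo : ℂ := ((Real.sqrt 2)⁻¹ : ℝ)

lemma invSqrtTwo_mul_self : invSqrtTwo * invSqrtTwo = 1 / 2 := by
  rw [invSqrtTwo, ← Complex.ofReal_mul, ← mul_inv, Real.mul_self_sqrt zero_le_two]
  norm_num

lemma conj_invSqrtTwo : starRingEnd ℂ invSqrtTwo = invSqrtTwo := Complex.conj_ofReal _

lemma psiPlus_two : psiPlus 2 = fun p => if p.1 = p.2 then invSqrtTwo else 0 := by
  funext p
  simp [psiPlus, invSqrtTwo]

/-- Sends `|00⟩ ↦ φ₂⁺` and `|11⟩ ↦ φ₂⁻`, and fixes `|01⟩`, `|10⟩`. -/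
noncomputable def bellRotation : Matrix (Fin 2 × Fin 2) (Fin 2 × Fin 2) ℂ := fun p q =>
  if q = (0, 0) then (if p = (0, 0) ∨ p = (1, 1) then invSqrtTwo else 0)
  else if q = (1, 1) then
    (if p = (0, 0) then invSqrtTwo else if p = (1, 1) then -invSqrtTwo else 0)
  else if p = q then 1 else 0

lemma bellRotation_mem_unitaryGroup : bellRotation ∈ unitaryGroup (Fin 2 × Fin 2) ℂ := by
  rw [mem_unitaryGroup_iff]
  ext p q
  have hc := invSqrtTwo_mul_self
  fin_cases p <;> fin_cases q <;>
    simp [mul_apply, Fintype.sum_prod_type, Fin.sum_univ_succ, bellRotation, star_apply,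
      conj_invSqrtTwo, Prod.ext_iff] <;>
    linear_combination 2 * hc

lemma conjTranspose_bellRotation_mulVec_psiPlus : bellRotationᴴ *ᵥ psiPlus 2 = ket 2 0 0 := by
  funext p
  have hc := invSqrtTwo_mul_self
  fin_cases p <;>
    simp [mulVec, dotProduct, Fintype.sum_prod_type, Fin.sum_univ_succ, bellRotation,
      conjTranspose_apply, conj_invSqrtTwo, psiPlus_two, ket, Prod.ext_iff]
  linear_combination 2 * hc

lemma AbsFEF.re_apply_zero_zero_le {σ : Matrix (Fin 2 × Fin 2) (Fin 2 × Fin 2) ℂ}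
    (hσ : AbsFEF 2 σ) : (σ (0, 0) (0, 0)).re ≤ 1 / 2 := by
  have h := hσ.re_expectation_le bellRotation_mem_unitaryGroup
  rwa [conjTranspose_bellRotation_mulVec_psiPlus, star_ket_dotProduct_mulVec_ket,
    Nat.cast_ofNat] at h

lemma trace_S₁_mul (σ : Matrix (Fin 2 × Fin 2) (Fin 2 × Fin 2) ℂ) :
    (S₁ * σ).trace = σ.trace / 2 - σ (0, 0) (0, 0) := by
  simp [trace, mul_apply, S₁, proj, ket, vecMulVec_apply, Fintype.sum_prod_type,
    Fin.sum_univ_succ, Prod.ext_iff]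
  ring

lemma re_trace_S₁_mul_nonneg {σ : Matrix (Fin 2 × Fin 2) (Fin 2 × Fin 2) ℂ}
    (htr : σ.trace = 1) (hσ : AbsFEF 2 σ) : 0 ≤ ((S₁ * σ).trace).re := by
  have h := hσ.re_apply_zero_zero_le
  rw [trace_S₁_mul, htr, Complex.sub_re]
  norm_num [h]

lemma trace_X₁ : X₁.trace = 1 := by
  have hc := invSqrtTwo_mul_self
  simp [trace, X₁, proj, ket, vecMulVec_apply, psiPlus_two, conj_invSqrtTwo,
    Fintype.sum_prod_type, Fin.sum_univ_succ, Prod.ext_iff]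
  linear_combination (4 / 9 : ℂ) * hc

lemma X₁_apply_zero_zero : X₁ (0, 0) (0, 0) = 2 / 3 := by
  have hc := invSqrtTwo_mul_self
  simp [X₁, proj, ket, vecMulVec_apply, psiPlus_two, conj_invSqrtTwo]
  linear_combination (2 / 9 : ℂ) * hc

lemma trace_S₁_mul_X₁ : (S₁ * X₁).trace = -(1 / 6) := by
  rw [trace_S₁_mul, trace_X₁, X₁_apply_zero_zero]
  norm_num

/-- `S₁` is a witness: nonnegative expectation on all of `𝔄𝔉₂`, while `Tr(S₁X₁) = −1/6 < 0`,
hence `X₁ ∉ 𝔄𝔉₂`. -/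
theorem S₁_witnesses_X₁ :
    (∀ σ : Matrix (Fin 2 × Fin 2) (Fin 2 × Fin 2) ℂ,
        IsDensityMatrix σ → AbsFEF 2 σ → 0 ≤ ((S₁ * σ).trace).re) ∧
      ((S₁ * X₁).trace).re = -(1/6) ∧ ((S₁ * X₁).trace).re < 0 ∧ ¬ AbsFEF 2 X₁ := by
  have hX : ((S₁ * X₁).trace).re = -(1 / 6) := by rw [trace_S₁_mul_X₁]; norm_num
  refine ⟨fun σ hσ => re_trace_S₁_mul_nonneg hσ.2, hX, by rw [hX]; norm_num, fun hA => ?_⟩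
  linarith [re_trace_S₁_mul_nonneg trace_X₁ hA]
end

section
/- Let ρ be a density matrix on ℂ² ⊗ ℂ² with purity Tr(ρ²) > 1/2. Then the largest eigenvalue of ρ exceeds 1/2, and consequently ρ ∉ 𝔄𝔉₂. In other words, no state of 𝔄𝔉₂ has purity exceeding 1/2. -/
/-!
Since the eigenvalues `λᵢ` of `ρ` are nonnegative and sum to `1`, the purity
`tr ρ² = ∑ λᵢ²` is at most `maxᵢ λᵢ`, so some `λᵢ` exceeds `1/2`. A unitary `U` carrying
`|φ₂⁺⟩` to the corresponding eigenvector gives `⟨φ₂⁺| U† ρ U |φ₂⁺⟩ = λᵢ`, and this is already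
the `V = I` term of the supremum defining `F(U† ρ U)`.
-/

open Matrix Kronecker Complex
open scoped ComplexOrder

lemma exists_orthonormalBasis_apply_eq {𝕜 E ι : Type*} [RCLike 𝕜] [NormedAddCommGroup E]
    [InnerProductSpace 𝕜 E] [FiniteDimensional 𝕜 E] [Fintype ι]
    (hι : Module.finrank 𝕜 E = Fintype.card ι) {u : E} (hu : ‖u‖ = 1) (i : ι) :
    ∃ b : OrthonormalBasis ι 𝕜 E, b i = u := by
  have hon : Orthonormal 𝕜 (({i} : Set ι).domRestrict fun _ ↦ u) :=
    ⟨fun _ ↦ hu, fun j k hjk ↦ absurd (Subsingleton.elim j k) hjk⟩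
  obtain ⟨b, hb⟩ := hon.exists_orthonormalBasis_extension_of_card_eq hι
  exact ⟨b, hb i rfl⟩

namespace Matrix

variable {𝕜 : Type*} [RCLike 𝕜] {n : Type*} [Fintype n] [DecidableEq n]

lemma IsHermitian.trace_mul_self_eq_sum_eigenvalues_sq {A : Matrix n n 𝕜} (hA : A.IsHermitian) :
    (A * A).trace = ∑ i, (hA.eigenvalues i : 𝕜) ^ 2 := by
  conv_lhs => rw [hA.spectral_theorem, ← map_mul, Unitary.conjStarAlgAut_apply, trace_mul_cycle,
    Unitary.coe_star_mul_self, one_mul, diagonal_mul_diagonal, trace_diagonal]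
  simp [sq]

lemma PosSemidef.re_trace_mul_self_le {A : Matrix n n 𝕜} (hA : A.PosSemidef) {c : ℝ}
    (hc : ∀ i, hA.isHermitian.eigenvalues i ≤ c) :
    RCLike.re (A * A).trace ≤ c * RCLike.re A.trace := by
  rw [hA.isHermitian.trace_mul_self_eq_sum_eigenvalues_sq, hA.isHermitian.trace_eq_sum_eigenvalues]
  simp only [map_sum, ← RCLike.ofReal_pow, RCLike.ofReal_re, Finset.mul_sum]
  exact Finset.sum_le_sum fun i _ ↦ by nlinarith [hA.eigenvalues_nonneg i, hc i]

open scoped Norms.L2Operator in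
lemma re_star_dotProduct_mulVec_le (A : Matrix n n 𝕜) (x : n → 𝕜) :
    RCLike.re (star x ⬝ᵥ A *ᵥ x) ≤ ‖A‖ * ‖WithLp.toLp 2 x‖ ^ 2 := by
  have h : star x ⬝ᵥ A *ᵥ x = inner 𝕜 (WithLp.toLp 2 x) (WithLp.toLp 2 (A *ᵥ x)) := by
    rw [EuclideanSpace.inner_toLp_toLp, dotProduct_comm]
  calc RCLike.re (star x ⬝ᵥ A *ᵥ x) ≤ ‖star x ⬝ᵥ A *ᵥ x‖ := RCLike.re_le_norm _
    _ ≤ ‖WithLp.toLp 2 x‖ * (‖A‖ * ‖WithLp.toLp 2 x‖) := by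
      rw [h]
      exact (norm_inner_le_norm _ _).trans
        (mul_le_mul_of_nonneg_left (l2_opNorm_mulVec A (WithLp.toLp 2 x)) (norm_nonneg _))
    _ = ‖A‖ * ‖WithLp.toLp 2 x‖ ^ 2 := by ring

lemma mulVec_single_toMatrix_orthonormalBasis (b : OrthonormalBasis n 𝕜 (EuclideanSpace 𝕜 n))
    (i : n) :
    (EuclideanSpace.basisFun n 𝕜).toBasis.toMatrix b.toBasis *ᵥ Pi.single i 1 = b i := by
  ext k
  simp [Module.Basis.toMatrix_apply]

lemma exists_mem_unitaryGroup_mulVec_eq {u v : n → 𝕜} (hu : ‖WithLp.toLp 2 u‖ = 1)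
    (hv : ‖WithLp.toLp 2 v‖ = 1) : ∃ U ∈ unitaryGroup n 𝕜, U *ᵥ u = v := by
  obtain ⟨i⟩ : Nonempty n := by
    by_contra h
    rw [not_nonempty_iff] at h
    simp [Subsingleton.elim (WithLp.toLp 2 u) 0] at hu
  have hcard := finrank_euclideanSpace (𝕜 := 𝕜) (ι := n)
  obtain ⟨a, ha⟩ := exists_orthonormalBasis_apply_eq hcard hu i
  obtain ⟨b, hb⟩ := exists_orthonormalBasis_apply_eq hcard hv i
  set A := (EuclideanSpace.basisFun n 𝕜).toBasis.toMatrix a.toBasis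
  set B := (EuclideanSpace.basisFun n 𝕜).toBasis.toMatrix b.toBasis
  have hA : A ∈ unitaryGroup n 𝕜 :=
    (EuclideanSpace.basisFun n 𝕜).toMatrix_orthonormalBasis_mem_unitary _
  have hB : B ∈ unitaryGroup n 𝕜 :=
    (EuclideanSpace.basisFun n 𝕜).toMatrix_orthonormalBasis_mem_unitary _
  refine ⟨B * star A, mul_mem hB (Unitary.star_mem hA), ?_⟩
  have hAu : A *ᵥ Pi.single i 1 = u := by
    rw [mulVec_single_toMatrix_orthonormalBasis, ha]
  rw [← mulVec_mulVec, ← hAu, mulVec_mulVec _ (star A), Unitary.star_mul_self_of_mem hA,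
    one_mulVec, mulVec_single_toMatrix_orthonormalBasis, hb]

end Matrix

lemma norm_toLp_psiPlus {d : ℕ} (hd : d ≠ 0) : ‖WithLp.toLp 2 (psiPlus d)‖ = 1 := by
  rw [EuclideanSpace.norm_eq]
  simp [psiPlus, Fintype.sum_prod_type, apply_ite, hd]

open scoped Matrix.Norms.L2Operator in
lemma re_psiPlus_dotProduct_mulVec_le_fef (d : ℕ)
    (σ : Matrix (Fin d × Fin d) (Fin d × Fin d) ℂ) :
    (star (psiPlus d) ⬝ᵥ σ *ᵥ psiPlus d).re ≤ fef d σ := by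
  unfold fef
  -- each term is bounded by `‖σ‖ ‖φ⁺‖²`, so `⨆` is a genuine supremum, not its junk value `0`
  have hbdd : BddAbove (Set.range fun V : Matrix.unitaryGroup (Fin d) ℂ =>
      (star (psiPlus d) ⬝ᵥ
        ((((1 : Matrix (Fin d) (Fin d) ℂ) ⊗ₖ (V : Matrix (Fin d) (Fin d) ℂ))ᴴ * σ *
          ((1 : Matrix (Fin d) (Fin d) ℂ) ⊗ₖ (V : Matrix (Fin d) (Fin d) ℂ)))
          *ᵥ psiPlus d)).re) := by
    refine ⟨‖σ‖ * ‖WithLp.toLp 2 (psiPlus d)‖ ^ 2, ?_⟩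
    rintro _ ⟨V, rfl⟩
    have hM : (1 : Matrix (Fin d) (Fin d) ℂ) ⊗ₖ (V : Matrix (Fin d) (Fin d) ℂ) ∈
        Matrix.unitaryGroup (Fin d × Fin d) ℂ :=
      kronecker_mem_unitary (one_mem _) V.2
    have hMσM := (CStarRing.norm_mul_mem_unitary _ hM).trans
      (CStarRing.norm_mem_unitary_mul σ (Unitary.star_mem hM))
    rw [star_eq_conjTranspose] at hMσM
    rw [← hMσM]
    exact re_star_dotProduct_mulVec_le _ (psiPlus d)
  simpa using le_ciSup hbdd 1

lemma AbsFEF.eigenvalues_le {d : ℕ} (hd : d ≠ 0) {ρ : Matrix (Fin d × Fin d) (Fin d × Fin d) ℂ}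
    (hρ : ρ.IsHermitian) (h : AbsFEF d ρ) (i : Fin d × Fin d) : hρ.eigenvalues i ≤ 1 / d := by
  obtain ⟨U, hU, hUψ⟩ := exists_mem_unitaryGroup_mulVec_eq (norm_toLp_psiPlus hd)
    (v := hρ.eigenvectorBasis i) (by simp)
  calc hρ.eigenvalues i
      = (star (psiPlus d) ⬝ᵥ (Uᴴ * ρ * U) *ᵥ psiPlus d).re := by
        rw [hρ.eigenvalues_eq, ← hUψ]
        simp only [star_mulVec, dotProduct_mulVec, vecMul_vecMul]
        rfl
    _ ≤ fef d (Uᴴ * ρ * U) := re_psiPlus_dotProduct_mulVec_le_fef d _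
    _ ≤ 1 / d := by
      simpa using h Uᴴ (by simpa [star_eq_conjTranspose] using Unitary.star_mem hU)

lemma IsDensityMatrix.exists_eigenvalue_gt_of_lt_purity {n : Type*} [Fintype n] [DecidableEq n]
    {ρ : Matrix n n ℂ} (hρ : IsDensityMatrix ρ) {c : ℝ} (hc : c < (ρ * ρ).trace.re) :
    ∃ i, c < hρ.1.isHermitian.eigenvalues i := by
  by_contra! h
  exact hc.not_ge (by simpa [hρ.2] using hρ.1.re_trace_mul_self_le h)

/-- A two-qubit density matrix with purity exceeding `1/2` has largest eigenvalue
exceeding `1/2` and consequently does not lie in `𝔄𝔉₂`. -/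
theorem not_absFEF_of_purity_gt (ρ : Matrix (Fin 2 × Fin 2) (Fin 2 × Fin 2) ℂ)
    (hρ : IsDensityMatrix ρ) (hpur : 1/2 < ((ρ * ρ).trace).re) :
    (∃ i, 1/2 < hρ.1.isHermitian.eigenvalues i) ∧ ¬ AbsFEF 2 ρ := by
  obtain ⟨i, hi⟩ := hρ.exists_eigenvalue_gt_of_lt_purity hpur
  refine ⟨⟨i, hi⟩, fun h ↦ ?_⟩
  have hle := h.eigenvalues_le two_ne_zero hρ.1.isHermitian i
  norm_num at hle
  linarith
end

section
/- Let t₁₁, t₂₂, t₃₃ be real numbers such that ρ := (1/4)I₄ + t₁₁σ₁⊗σ₁ + t₂₂σ₂⊗σ₂ + t₃₃σ₃⊗σ₃ is a density matrix on ℂ² ⊗ ℂ². Then the eigenvalues of ρ are (1/4)(1 − 4(t₁₁+t₂₂+t₃₃)), (1/4)(1 + 4(t₁₁+t₂₂−t₃₃)), (1/4)(1 + 4(t₁₁−t₂₂+t₃₃)), and (1/4)(1 + 4(−t₁₁+t₂₂+t₃₃)); moreover ρ ∈ 𝔄𝔉₂ if and only if max{−(t₁₁+t₂₂+t₃₃),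 t₁₁+t₂₂−t₃₃, t₁₁−t₂₂+t₃₃, −t₁₁+t₂₂+t₃₃} ≤ 1/4. -/
open Matrix Kronecker Complex
open scoped ComplexOrder

/-- The Pauli matrices. -/
def pauli1 : Matrix (Fin 2) (Fin 2) ℂ := !![0, 1; 1, 0]
def pauli2 : Matrix (Fin 2) (Fin 2) ℂ := !![0, -Complex.I; Complex.I, 0]
def pauli3 : Matrix (Fin 2) (Fin 2) ℂ := !![1, 0; 0, -1]

/-- The Bell-diagonal-type state `ρ = (1/4)I + t₁₁σ₁⊗σ₁ + t₂₂σ₂⊗σ₂ + t₃₃σ₃⊗σ₃`. -/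
noncomputable def bellDiag (t₁₁ t₂₂ t₃₃ : ℝ) : Matrix (Fin 2 × Fin 2) (Fin 2 × Fin 2) ℂ :=
  (1/4 : ℂ) • (1 : Matrix (Fin 2 × Fin 2) (Fin 2 × Fin 2) ℂ) +
    (t₁₁ : ℂ) • (pauli1 ⊗ₖ pauli1) + (t₂₂ : ℂ) • (pauli2 ⊗ₖ pauli2) +
    (t₃₃ : ℂ) • (pauli3 ⊗ₖ pauli3)

/-
In the Bell basis `{(I ⊗ V_q)|ψ⁺⟩}` the state `ρ` is diagonal with the four stated eigenvalues
`λ_q`. Every state `(I ⊗ V)|ψ⁺⟩` with `V` unitary is a unit vector, so `F(UρU†) ≤ max_q λ_q` for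
all unitaries `U`, while `V = V_q` attains `λ_q` in `F(ρ)`. Hence `ρ ∈ 𝔄𝔉₂` iff every `λ_q ≤ 1/2`,
which is the stated condition.
-/

section UnitaryDiagonalization

variable {n : Type*} [Fintype n]

lemma star_mulVec_dotProduct_mulVec_mulVec (A M : Matrix n n ℂ) (x : n → ℂ) :
    star (A *ᵥ x) ⬝ᵥ (M *ᵥ (A *ᵥ x)) = star x ⬝ᵥ ((Aᴴ * M * A) *ᵥ x) := by
  rw [star_mulVec, ← dotProduct_mulVec, mulVec_mulVec, mulVec_mulVec, Matrix.mul_assoc]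

variable [DecidableEq n]

lemma re_star_dotProduct_mulVec_le {M : Matrix n n ℂ} {c : ℝ}
    (hM : ((c : ℂ) • 1 - M).PosSemidef) {u : n → ℂ} (hu : star u ⬝ᵥ u = 1) :
    (star u ⬝ᵥ (M *ᵥ u)).re ≤ c := by
  have h := (posSemidef_iff_dotProduct_mulVec.mp hM).2 u
  rw [sub_mulVec, dotProduct_sub, smul_mulVec, one_mulVec, dotProduct_smul, hu, smul_eq_mul,
    mul_one] at h
  simpa [sub_nonneg] using (Complex.le_def.mp h).1

lemma eq_mul_diagonal_mul_conjTranspose {A U : Matrix n n ℂ} (hU : U ∈ unitaryGroup n ℂ)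
    {μ : n → ℂ} (h : ∀ q, A *ᵥ Uᵀ q = μ q • Uᵀ q) : A = U * diagonal μ * Uᴴ := by
  have hAU : A * U = U * diagonal μ := by
    ext p q
    rw [mul_diagonal]
    simpa [mulVec, dotProduct, mul_apply, mul_comm] using congrFun (h q) p
  rw [← hAU, Matrix.mul_assoc, ← star_eq_conjTranspose, mem_unitaryGroup_iff.mp hU, Matrix.mul_one]

open Polynomial in
lemma Matrix.IsHermitian.map_eigenvalues_eq_of_eq_mul_diagonal {A U : Matrix n n ℂ}
    (hA : A.IsHermitian) (hU : U ∈ unitaryGroup n ℂ) {μ : n → ℝ}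
    (h : A = U * diagonal (fun q => (μ q : ℂ)) * Uᴴ) :
    Finset.univ.val.map hA.eigenvalues = Finset.univ.val.map μ := by
  have hcharpoly : A.charpoly = ∏ q, (X - C (μ q : ℂ)) := by
    rw [h, Matrix.mul_assoc, charpoly_mul_comm, Matrix.mul_assoc, ← star_eq_conjTranspose,
      mem_unitaryGroup_iff'.mp hU, Matrix.mul_one, charpoly_diagonal]
  have hroots := hA.roots_charpoly_eq_eigenvalues
  rw [hcharpoly, roots_prod _ _ (Finset.prod_ne_zero_iff.mpr fun q _ => X_sub_C_ne_zero _)]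
    at hroots
  refine Multiset.map_injective Complex.ofReal_injective ?_
  simpa [Multiset.map_map] using hroots.symm

lemma posSemidef_smul_one_sub_mul_diagonal_mul_conjTranspose {U : Matrix n n ℂ}
    (hU : U ∈ unitaryGroup n ℂ) {μ : n → ℝ} {c : ℝ} (hμ : ∀ q, μ q ≤ c) :
    ((c : ℂ) • 1 - U * diagonal (fun q => (μ q : ℂ)) * Uᴴ).PosSemidef := by
  have hc : (c : ℂ) • (1 : Matrix n n ℂ) = U * diagonal (fun _ => (c : ℂ)) * Uᴴ := by
    rw [← smul_one_eq_diagonal, Matrix.mul_smul, Matrix.mul_one, Matrix.smul_mul,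
      ← star_eq_conjTranspose, mem_unitaryGroup_iff.mp hU]
  rw [hc, ← Matrix.sub_mul, ← Matrix.mul_sub, diagonal_sub]
  refine PosSemidef.mul_mul_conjTranspose_same (posSemidef_diagonal_iff.mpr fun q => ?_) U
  exact_mod_cast sub_nonneg.mpr (hμ q)

end UnitaryDiagonalization

section FullyEntangledFraction

noncomputable def maxEntState (d : ℕ) (V : Matrix (Fin d) (Fin d) ℂ) : Fin d × Fin d → ℂ :=
  ((1 : Matrix (Fin d) (Fin d) ℂ) ⊗ₖ V) *ᵥ psiPlus d

variable {d : ℕ}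

lemma maxEntState_apply (V : Matrix (Fin d) (Fin d) ℂ) (i j : Fin d) :
    maxEntState d V (i, j) = V j i * ((Real.sqrt d)⁻¹ : ℝ) := by
  simp [maxEntState, psiPlus, mulVec, dotProduct, Fintype.sum_prod_type, one_apply]

lemma star_psiPlus_dotProduct_one_kronecker_mulVec (M : Matrix (Fin d) (Fin d) ℂ) :
    star (psiPlus d) ⬝ᵥ (((1 : Matrix (Fin d) (Fin d) ℂ) ⊗ₖ M) *ᵥ psiPlus d) = M.trace / d := by
  have hsq : (((Real.sqrt d)⁻¹ : ℝ) : ℂ) * (((Real.sqrt d)⁻¹ : ℝ) : ℂ) = (d : ℂ)⁻¹ := by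
    rw [← Complex.ofReal_mul, ← mul_inv, Real.mul_self_sqrt (Nat.cast_nonneg d)]
    simp
  change star (psiPlus d) ⬝ᵥ maxEntState d M = _
  simp only [dotProduct, Fintype.sum_prod_type, maxEntState_apply, Pi.star_apply, psiPlus,
    apply_ite star, star_zero, ite_mul, zero_mul, Finset.sum_ite_eq, Finset.mem_univ, if_true,
    trace, diag_apply, Finset.sum_div, Complex.star_def, Complex.conj_ofReal]
  refine Finset.sum_congr rfl fun i _ => ?_
  linear_combination M i i * hsq

lemma star_maxEntState_dotProduct_maxEntState (V W : Matrix (Fin d) (Fin d) ℂ) :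
    star (maxEntState d V) ⬝ᵥ maxEntState d W = (Vᴴ * W).trace / d := by
  rw [maxEntState, maxEntState, star_mulVec, ← dotProduct_mulVec, mulVec_mulVec,
    conjTranspose_kronecker, conjTranspose_one, ← mul_kronecker_mul, Matrix.one_mul,
    star_psiPlus_dotProduct_one_kronecker_mulVec]

lemma star_maxEntState_dotProduct_self [NeZero d] {V : Matrix (Fin d) (Fin d) ℂ}
    (hV : V ∈ unitaryGroup (Fin d) ℂ) : star (maxEntState d V) ⬝ᵥ maxEntState d V = 1 := by
  rw [star_maxEntState_dotProduct_maxEntState, ← star_eq_conjTranspose,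
    mem_unitaryGroup_iff'.mp hV, trace_one, Fintype.card_fin, div_self (NeZero.ne _)]

lemma fef_eq_iSup (ρ : Matrix (Fin d × Fin d) (Fin d × Fin d) ℂ) :
    fef d ρ = ⨆ V : unitaryGroup (Fin d) ℂ,
      (star (maxEntState d V) ⬝ᵥ (ρ *ᵥ maxEntState d V)).re := by
  simp only [fef, maxEntState, star_mulVec_dotProduct_mulVec_mulVec]

lemma fef_le_of_posSemidef [NeZero d] {ρ : Matrix (Fin d × Fin d) (Fin d × Fin d) ℂ} {c : ℝ}
    (hc : ((c : ℂ) • 1 - ρ).PosSemidef) : fef d ρ ≤ c := by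
  rw [fef_eq_iSup]
  exact ciSup_le fun V => re_star_dotProduct_mulVec_le hc (star_maxEntState_dotProduct_self V.2)

lemma le_fef_of_posSemidef [NeZero d] {ρ : Matrix (Fin d × Fin d) (Fin d × Fin d) ℂ} {c : ℝ}
    (hc : ((c : ℂ) • 1 - ρ).PosSemidef) (V : unitaryGroup (Fin d) ℂ) :
    (star (maxEntState d V) ⬝ᵥ (ρ *ᵥ maxEntState d V)).re ≤ fef d ρ := by
  rw [fef_eq_iSup]
  refine le_ciSup (f := fun W : unitaryGroup (Fin d) ℂ =>
    (star (maxEntState d W) ⬝ᵥ (ρ *ᵥ maxEntState d W)).re) ⟨c, ?_⟩ V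
  rintro _ ⟨W, rfl⟩
  exact re_star_dotProduct_mulVec_le hc (star_maxEntState_dotProduct_self W.2)

end FullyEntangledFraction

section BellBasis

/-- The states `(I ⊗ V_q)|ψ⁺⟩` are the four Bell states, which diagonalize every `bellDiag`. -/
def bellLocalUnitary : Fin 2 × Fin 2 → Matrix (Fin 2) (Fin 2) ℂ
  | (0, 0) => !![0, -1; 1, 0]
  | (0, 1) => pauli1
  | (1, 0) => 1
  | (1, 1) => pauli3

noncomputable def bellEigenvalue (t₁₁ t₂₂ t₃₃ : ℝ) : Fin 2 × Fin 2 → ℝ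
  | (0, 0) => (1 - 4*(t₁₁ + t₂₂ + t₃₃))/4
  | (0, 1) => (1 + 4*(t₁₁ + t₂₂ - t₃₃))/4
  | (1, 0) => (1 + 4*(t₁₁ - t₂₂ + t₃₃))/4
  | (1, 1) => (1 + 4*(-t₁₁ + t₂₂ + t₃₃))/4

lemma bellLocalUnitary_mem (q : Fin 2 × Fin 2) : bellLocalUnitary q ∈ unitaryGroup (Fin 2) ℂ := by
  rw [mem_unitaryGroup_iff']
  rcases q with ⟨a, b⟩
  fin_cases a <;> fin_cases b <;>
    · ext i j
      fin_cases i <;> fin_cases j <;>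
        simp [bellLocalUnitary, pauli1, pauli3, mul_apply, Fin.sum_univ_two, one_apply]

lemma trace_conjTranspose_mul_bellLocalUnitary (q r : Fin 2 × Fin 2) :
    ((bellLocalUnitary q)ᴴ * bellLocalUnitary r).trace = if q = r then 2 else 0 := by
  rcases q with ⟨a, b⟩; rcases r with ⟨c, e⟩
  fin_cases a <;> fin_cases b <;> fin_cases c <;> fin_cases e <;>
    simp [bellLocalUnitary, pauli1, pauli3, trace, mul_apply, Fin.sum_univ_two] <;> norm_num

noncomputable def bellUnitary : Matrix (Fin 2 × Fin 2) (Fin 2 × Fin 2) ℂ :=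
  of fun p q => maxEntState 2 (bellLocalUnitary q) p

lemma bellUnitary_mem : bellUnitary ∈ unitaryGroup (Fin 2 × Fin 2) ℂ := by
  rw [mem_unitaryGroup_iff']
  ext q r
  have h := star_maxEntState_dotProduct_maxEntState (bellLocalUnitary q) (bellLocalUnitary r)
  rw [trace_conjTranspose_mul_bellLocalUnitary] at h
  rw [star_eq_conjTranspose, mul_apply, one_apply]
  simp only [bellUnitary, conjTranspose_apply, of_apply]
  split_ifs at h ⊢ <;> simpa [dotProduct] using h

lemma bellDiag_mulVec_maxEntState (t₁₁ t₂₂ t₃₃ : ℝ) (q : Fin 2 × Fin 2) :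
    bellDiag t₁₁ t₂₂ t₃₃ *ᵥ maxEntState 2 (bellLocalUnitary q) =
      (bellEigenvalue t₁₁ t₂₂ t₃₃ q : ℂ) • maxEntState 2 (bellLocalUnitary q) := by
  rcases q with ⟨a, b⟩
  ext ⟨i, j⟩
  fin_cases a <;> fin_cases b <;> fin_cases i <;> fin_cases j <;>
    simp [mulVec, dotProduct, Fintype.sum_prod_type, maxEntState_apply, bellDiag,
      bellLocalUnitary, bellEigenvalue, pauli1, pauli2, pauli3, one_apply] <;> ring

lemma bellDiag_eq_mul_diagonal_mul_conjTranspose (t₁₁ t₂₂ t₃₃ : ℝ) :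
    bellDiag t₁₁ t₂₂ t₃₃ =
      bellUnitary * diagonal (fun q => (bellEigenvalue t₁₁ t₂₂ t₃₃ q : ℂ)) * bellUnitaryᴴ :=
  eq_mul_diagonal_mul_conjTranspose bellUnitary_mem (bellDiag_mulVec_maxEntState t₁₁ t₂₂ t₃₃)

lemma bellEigenvalue_le_fef (t₁₁ t₂₂ t₃₃ : ℝ) (q : Fin 2 × Fin 2) :
    bellEigenvalue t₁₁ t₂₂ t₃₃ q ≤ fef 2 (bellDiag t₁₁ t₂₂ t₃₃) := by
  -- `fef` is a supremum in `ℝ`, so `le_ciSup` needs some upper bound on the spectrum.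
  have hbound : ∀ r, bellEigenvalue t₁₁ t₂₂ t₃₃ r ≤ ∑ r, |bellEigenvalue t₁₁ t₂₂ t₃₃ r| :=
    fun r => (le_abs_self _).trans
      (Finset.single_le_sum (f := fun r => |bellEigenvalue t₁₁ t₂₂ t₃₃ r|)
        (fun _ _ => abs_nonneg _) (Finset.mem_univ r))
  have hc := posSemidef_smul_one_sub_mul_diagonal_mul_conjTranspose bellUnitary_mem hbound
  rw [← bellDiag_eq_mul_diagonal_mul_conjTranspose] at hc
  have hle := le_fef_of_posSemidef hc ⟨_, bellLocalUnitary_mem q⟩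
  rwa [bellDiag_mulVec_maxEntState, dotProduct_smul, star_maxEntState_dotProduct_self
    (bellLocalUnitary_mem q), smul_eq_mul, mul_one, Complex.ofReal_re] at hle

lemma fef_conj_bellDiag_le {t₁₁ t₂₂ t₃₃ c : ℝ} (hc : ∀ q, bellEigenvalue t₁₁ t₂₂ t₃₃ q ≤ c)
    {U : Matrix (Fin 2 × Fin 2) (Fin 2 × Fin 2) ℂ} (hU : U ∈ unitaryGroup (Fin 2 × Fin 2) ℂ) :
    fef 2 (U * bellDiag t₁₁ t₂₂ t₃₃ * Uᴴ) ≤ c := by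
  have hconj : U * bellDiag t₁₁ t₂₂ t₃₃ * Uᴴ = (U * bellUnitary) *
      diagonal (fun q => (bellEigenvalue t₁₁ t₂₂ t₃₃ q : ℂ)) * (U * bellUnitary)ᴴ := by
    rw [bellDiag_eq_mul_diagonal_mul_conjTranspose, conjTranspose_mul]
    simp only [Matrix.mul_assoc]
  rw [hconj]
  exact fef_le_of_posSemidef
    (posSemidef_smul_one_sub_mul_diagonal_mul_conjTranspose (mul_mem hU bellUnitary_mem) hc)

lemma map_bellEigenvalue (t₁₁ t₂₂ t₃₃ : ℝ) :
    Finset.univ.val.map (bellEigenvalue t₁₁ t₂₂ t₃₃) =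
      {(1 - 4*(t₁₁ + t₂₂ + t₃₃))/4, (1 + 4*(t₁₁ + t₂₂ - t₃₃))/4,
       (1 + 4*(t₁₁ - t₂₂ + t₃₃))/4, (1 + 4*(-t₁₁ + t₂₂ + t₃₃))/4} :=
  rfl

lemma forall_bellEigenvalue_le_half_iff (t₁₁ t₂₂ t₃₃ : ℝ) :
    (∀ q, bellEigenvalue t₁₁ t₂₂ t₃₃ q ≤ 1/2) ↔
      max (max (-(t₁₁ + t₂₂ + t₃₃)) (t₁₁ + t₂₂ - t₃₃))
        (max (t₁₁ - t₂₂ + t₃₃) (-t₁₁ + t₂₂ + t₃₃)) ≤ 1/4 := by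
  simp only [Prod.forall, Fin.forall_fin_two, bellEigenvalue, max_le_iff]
  constructor <;> rintro ⟨⟨h₁, h₂⟩, h₃, h₄⟩ <;> refine ⟨⟨?_, ?_⟩, ?_, ?_⟩ <;> linarith

end BellBasis

/-- Eigenvalues of `(1/4)I + Σ tᵢᵢ σᵢ⊗σᵢ` and its membership in `𝔄𝔉₂`:
the eigenvalues are `(1 ∓ 4(±t₁₁ ± t₂₂ ± t₃₃))/4` as stated, and the state lies in `𝔄𝔉₂`
iff `max{−(t₁₁+t₂₂+t₃₃), t₁₁+t₂₂−t₃₃, t₁₁−t₂₂+t₃₃, −t₁₁+t₂₂+t₃₃} ≤ 1/4`. -/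
theorem bellDiag_absFEF_iff (t₁₁ t₂₂ t₃₃ : ℝ)
    (hρ : IsDensityMatrix (bellDiag t₁₁ t₂₂ t₃₃)) :
    (Finset.univ.val.map hρ.1.isHermitian.eigenvalues : Multiset ℝ) =
      {(1 - 4*(t₁₁ + t₂₂ + t₃₃))/4, (1 + 4*(t₁₁ + t₂₂ - t₃₃))/4,
       (1 + 4*(t₁₁ - t₂₂ + t₃₃))/4, (1 + 4*(-t₁₁ + t₂₂ + t₃₃))/4} ∧
    (AbsFEF 2 (bellDiag t₁₁ t₂₂ t₃₃) ↔
      max (max (-(t₁₁ + t₂₂ + t₃₃)) (t₁₁ + t₂₂ - t₃₃))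
        (max (t₁₁ - t₂₂ + t₃₃) (-t₁₁ + t₂₂ + t₃₃)) ≤ 1/4) := by
  refine ⟨?_, ?_⟩
  · rw [hρ.1.isHermitian.map_eigenvalues_eq_of_eq_mul_diagonal bellUnitary_mem
      (bellDiag_eq_mul_diagonal_mul_conjTranspose t₁₁ t₂₂ t₃₃)]
    exact map_bellEigenvalue t₁₁ t₂₂ t₃₃
  · rw [← forall_bellEigenvalue_le_half_iff, AbsFEF, Nat.cast_ofNat]
    constructor
    · intro h q
      have hfef : fef 2 (bellDiag t₁₁ t₂₂ t₃₃) ≤ 1/2 := by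
        simpa using h 1 (one_mem _)
      exact (bellEigenvalue_le_fef t₁₁ t₂₂ t₃₃ q).trans hfef
    · exact fun h U hU => fef_conj_bellDiag_le h hU
end
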